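/- arXiv:2411.07269 — 3 statements merged into one kernel-verified Lean document; each statement's English description precedes it below -/
import Mathlib

section
/- Every permutation-invariant multilinear polynomial map f: (ℝ^F)^k → ℝ^d can be computed by a CP layer with linear (identity) activations; i.e., there exist R ∈ ℕ, W ∈ ℝ^{(F+1)×R}, M ∈ ℝ^{d×R} such that for all x_1,...,x_k ∈ ℝ^F, f(x_1,...,x_k) = M((Wᵀ[x_1;1]) ⊙ ⋯ ⊙ (Wᵀ[x_k;1])). -/
open Finset

lemma aux_sup {k : ℕ} (T : Finset (Fin k)) :
    ∑ S : Finset (Fin k), (if T ⊆ S then ((-1:ℝ))^(k - S.card) else 0)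
      = if T = Finset.univ then 1 else 0 := by
  classical
  rw [← Fintype.sum_equiv (⟨compl, compl, fun S => compl_compl S, fun S => compl_compl S⟩ :
        Finset (Fin k) ≃ Finset (Fin k))
      (fun U => if T ⊆ Uᶜ then ((-1:ℝ))^(k - (Uᶜ).card) else 0)
      (fun S => if T ⊆ S then ((-1:ℝ))^(k - S.card) else 0) (fun U => rfl)]
  have hterm : ∀ U : Finset (Fin k),
      (if T ⊆ Uᶜ then ((-1:ℝ))^(k - (Uᶜ).card) else 0)
        = if U ⊆ Tᶜ then (-1:ℝ)^U.card else 0 := by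
    intro U
    have h1 : (T ⊆ Uᶜ) ↔ (U ⊆ Tᶜ) := Finset.subset_compl_comm
    have h2 : k - (Uᶜ).card = U.card := by
      rw [Finset.card_compl, Fintype.card_fin]
      exact Nat.sub_sub_self (by simpa using Finset.card_le_univ U)
    rw [h2]
    simp [h1]
  simp_rw [hterm]
  have h3 : (∑ U : Finset (Fin k), if U ⊆ Tᶜ then (-1:ℝ)^U.card else 0)
      = ∑ U ∈ (Tᶜ).powerset, (-1:ℝ)^U.card := by
    rw [← Finset.sum_filter]
    congr 1
    ext S
    simp
  rw [h3]
  have h4 : (∑ U ∈ (Tᶜ).powerset, (-1:ℝ)^U.card)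
      = ((∑ U ∈ (Tᶜ).powerset, (-1:ℤ)^U.card : ℤ) : ℝ) := by push_cast; rfl
  rw [h4, Finset.sum_powerset_neg_one_pow_card]
  by_cases h : T = Finset.univ <;> simp [h, Finset.compl_eq_empty_iff]

lemma aux_polar {k : ℕ} (a : Fin k → Fin k → ℝ) :
    ∑ S : Finset (Fin k), (-1:ℝ)^(k - S.card) * ∏ ℓ, (∑ m ∈ S, a m ℓ)
      = ∑ φ : Equiv.Perm (Fin k), ∏ ℓ, a (φ ℓ) ℓ := by
  classical
  have step1 : ∀ S : Finset (Fin k),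
      (-1:ℝ)^(k - S.card) * (∏ ℓ, ∑ m ∈ S, a m ℓ)
        = ∑ g : Fin k → Fin k, (if Finset.image g Finset.univ ⊆ S
            then (-1:ℝ)^(k - S.card) * ∏ ℓ, a (g ℓ) ℓ else 0) := by
    intro S
    rw [Finset.prod_univ_sum, Finset.mul_sum, ← Finset.sum_filter]
    apply Finset.sum_congr
    · ext g
      simp [Fintype.mem_piFinset, Finset.image_subset_iff]
    · intros; rfl
  simp_rw [step1]
  rw [Finset.sum_comm]
  have step3 : ∀ g : Fin k → Fin k,
      (∑ S : Finset (Fin k), if Finset.image g Finset.univ ⊆ S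
          then (-1:ℝ)^(k - S.card) * ∏ ℓ, a (g ℓ) ℓ else 0)
        = (if Finset.image g Finset.univ = Finset.univ then 1 else 0) * ∏ ℓ, a (g ℓ) ℓ := by
    intro g
    rw [← aux_sup, Finset.sum_mul]
    exact Finset.sum_congr rfl fun S _ => by split_ifs <;> simp
  simp_rw [step3, ite_mul, one_mul, zero_mul, ← Finset.sum_filter]
  symm
  apply Finset.sum_bij (fun (φ : Equiv.Perm (Fin k)) _ => (φ : Fin k → Fin k))
  · intro φ _
    simp only [Finset.mem_filter, Finset.mem_univ, true_and]
    ext y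
    simp only [Finset.mem_image, Finset.mem_univ, true_and, iff_true]
    exact ⟨φ.symm y, φ.apply_symm_apply y⟩
  · intro φ₁ _ φ₂ _ h
    exact Equiv.coe_fn_injective h
  · intro g hg
    simp only [Finset.mem_filter, Finset.mem_univ, true_and] at hg
    have hsurj : Function.Surjective g := fun y => by
      have : y ∈ Finset.image g Finset.univ := by rw [hg]; exact Finset.mem_univ y
      obtain ⟨x, _, hx⟩ := Finset.mem_image.mp this
      exact ⟨x, hx⟩
    have hb : Function.Bijective g := Finite.surjective_iff_bijective.mp hsurj
    exact ⟨Equiv.ofBijective g hb, Finset.mem_univ _, rfl⟩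
  · intro φ _
    rfl

lemma aux_swap3 {A B C : Type*} [Fintype A] [Fintype B] [Fintype C] (g : A → B → C → ℝ) :
    ∑ a : A, ∑ b : B, ∑ c : C, g a b c = ∑ c : C, ∑ a : A, ∑ b : B, g a b c :=
  calc ∑ a : A, ∑ b : B, ∑ c : C, g a b c
      = ∑ a : A, ∑ c : C, ∑ b : B, g a b c :=
        Finset.sum_congr rfl fun a _ => Finset.sum_comm
    _ = ∑ c : C, ∑ a : A, ∑ b : B, g a b c := Finset.sum_comm

lemma aux_reindex {F k d : ℕ} (f : (Fin k → Fin F → ℝ) → Fin d → ℝ)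
    {α : Type*} [Fintype α] (W : Fin (F + 1) → α → ℝ) (M : Fin d → α → ℝ)
    (h : ∀ x i, f x i = ∑ t : α, M i t * ∏ ℓ, ∑ p, W p t * (Fin.snoc (x ℓ) 1 : Fin (F + 1) → ℝ) p) :
    ∃ (R : ℕ) (W' : Matrix (Fin (F + 1)) (Fin R) ℝ) (M' : Matrix (Fin d) (Fin R) ℝ),
      ∀ (x : Fin k → Fin F → ℝ) (i : Fin d),
        f x i = ∑ r, M' i r * ∏ ℓ, ∑ p, W' p r * (Fin.snoc (x ℓ) 1 : Fin (F + 1) → ℝ) p := by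
  refine ⟨Fintype.card α, fun p r => W p ((Fintype.equivFin α).symm r),
    fun i r => M i ((Fintype.equivFin α).symm r), fun x i => ?_⟩
  rw [h]
  exact Fintype.sum_equiv (Fintype.equivFin α) _ _ (fun t => by simp)

/-- Every permutation-invariant multilinear polynomial map can be computed by
a CP layer with linear (identity) activations. -/
theorem stmt6 (F k d : ℕ)
    (τ : Fin d → (Fin k → Fin F) → (Fin k → Bool) → ℝ)
    (f : (Fin k → Fin F → ℝ) → Fin d → ℝ)
    (hf : ∀ (x : Fin k → Fin F → ℝ) (i : Fin d),
      f x i = ∑ j : Fin k → Fin F, ∑ ε : Fin k → Bool,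
        τ i j ε * ∏ ℓ, (if ε ℓ then x ℓ (j ℓ) else 1))
    (hinv : ∀ (φ : Equiv.Perm (Fin k)) (x : Fin k → Fin F → ℝ),
      f (fun ℓ => x (φ ℓ)) = f x) :
    ∃ (R : ℕ) (W : Matrix (Fin (F + 1)) (Fin R) ℝ) (M : Matrix (Fin d) (Fin R) ℝ),
      ∀ (x : Fin k → Fin F → ℝ) (i : Fin d),
        f x i = ∑ r, M i r * ∏ ℓ, ∑ p, W p r * (Fin.snoc (x ℓ) 1 : Fin (F + 1) → ℝ) p := by
  classical
  have hk : (k.factorial : ℝ) ≠ 0 := Nat.cast_ne_zero.mpr (Nat.factorial_ne_zero k)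
  apply aux_reindex f
    (fun p (t : (Fin k → Fin F) × (Fin k → Bool) × Finset (Fin k)) =>
      ∑ m ∈ t.2.2, (if t.2.1 m then (Pi.single (Fin.castSucc (t.1 m)) 1 : Fin (F + 1) → ℝ)
        else Pi.single (Fin.last F) 1) p)
    (fun i t => (k.factorial : ℝ)⁻¹ * (τ i t.1 t.2.1 * (-1 : ℝ) ^ (k - t.2.2.card)))
  intro x i
  have hlin : ∀ (j : Fin k → Fin F) (ε : Fin k → Bool) (S : Finset (Fin k)) (ℓ : Fin k),
      (∑ p, (∑ m ∈ S, (if ε m then (Pi.single (Fin.castSucc (j m)) 1 : Fin (F + 1) → ℝ)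
          else Pi.single (Fin.last F) 1) p) * (Fin.snoc (x ℓ) 1 : Fin (F + 1) → ℝ) p)
        = ∑ m ∈ S, (if ε m then x ℓ (j m) else 1) := by
    intro j ε S ℓ
    simp_rw [Finset.sum_mul]
    rw [Finset.sum_comm]
    refine Finset.sum_congr rfl fun m _ => ?_
    by_cases h : ε m <;>
      simp [h, Pi.single_apply, ite_mul, Fin.snoc_castSucc, Fin.snoc_last]
  have hperm : ∀ φ : Equiv.Perm (Fin k),
      (∑ j : Fin k → Fin F, ∑ ε : Fin k → Bool,
        τ i j ε * ∏ ℓ, (if ε (φ ℓ) then x ℓ (j (φ ℓ)) else 1)) = f x i := by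
    intro φ
    rw [← hinv φ.symm x, hf]
    refine Finset.sum_congr rfl fun j _ => Finset.sum_congr rfl fun ε _ => ?_
    congr 1
    rw [← Equiv.prod_comp φ (fun ℓ => if ε ℓ then x (φ.symm ℓ) (j ℓ) else 1)]
    simp
  symm
  calc ∑ t : (Fin k → Fin F) × (Fin k → Bool) × Finset (Fin k),
        (k.factorial : ℝ)⁻¹ * (τ i t.1 t.2.1 * (-1 : ℝ) ^ (k - t.2.2.card)) *
          ∏ ℓ, ∑ p, (∑ m ∈ t.2.2, (if t.2.1 m then (Pi.single (Fin.castSucc (t.1 m)) 1 : Fin (F + 1) → ℝ)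
            else Pi.single (Fin.last F) 1) p) * (Fin.snoc (x ℓ) 1 : Fin (F + 1) → ℝ) p
      = ∑ j : Fin k → Fin F, ∑ ε : Fin k → Bool, ∑ S : Finset (Fin k),
          (k.factorial : ℝ)⁻¹ * (τ i j ε * (-1 : ℝ) ^ (k - S.card)) *
            ∏ ℓ, ∑ m ∈ S, (if ε m then x ℓ (j m) else 1) := by
        rw [Fintype.sum_prod_type]
        refine Finset.sum_congr rfl fun j _ => ?_
        rw [Fintype.sum_prod_type]
        refine Finset.sum_congr rfl fun ε _ => Finset.sum_congr rfl fun S _ => ?_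
        rw [Finset.prod_congr rfl fun ℓ _ => hlin j ε S ℓ]
    _ = ∑ j : Fin k → Fin F, ∑ ε : Fin k → Bool,
          (k.factorial : ℝ)⁻¹ * (τ i j ε * ∑ S : Finset (Fin k),
            (-1 : ℝ) ^ (k - S.card) * ∏ ℓ, ∑ m ∈ S, (if ε m then x ℓ (j m) else 1)) := by
        refine Finset.sum_congr rfl fun j _ => Finset.sum_congr rfl fun ε _ => ?_
        simp_rw [Finset.mul_sum]
        exact Finset.sum_congr rfl fun S _ => by ring
    _ = ∑ j : Fin k → Fin F, ∑ ε : Fin k → Bool,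
          (k.factorial : ℝ)⁻¹ * (τ i j ε * ∑ φ : Equiv.Perm (Fin k),
            ∏ ℓ, (if ε (φ ℓ) then x ℓ (j (φ ℓ)) else 1)) := by
        refine Finset.sum_congr rfl fun j _ => Finset.sum_congr rfl fun ε _ => ?_
        rw [aux_polar (fun m ℓ => if ε m then x ℓ (j m) else 1)]
    _ = ∑ j : Fin k → Fin F, ∑ ε : Fin k → Bool, ∑ φ : Equiv.Perm (Fin k),
          (k.factorial : ℝ)⁻¹ * (τ i j ε * ∏ ℓ, (if ε (φ ℓ) then x ℓ (j (φ ℓ)) else 1)) := by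
        simp only [Finset.mul_sum]
    _ = ∑ φ : Equiv.Perm (Fin k), ∑ j : Fin k → Fin F, ∑ ε : Fin k → Bool,
          (k.factorial : ℝ)⁻¹ * (τ i j ε * ∏ ℓ, (if ε (φ ℓ) then x ℓ (j (φ ℓ)) else 1)) :=
        aux_swap3 _
    _ = ∑ _φ : Equiv.Perm (Fin k), (k.factorial : ℝ)⁻¹ * f x i := by
        refine Finset.sum_congr rfl fun φ _ => ?_
        simp_rw [← Finset.mul_sum]
        rw [hperm φ]
    _ = f x i := by
        rw [Finset.sum_const]
        simp only [Finset.card_univ, Fintype.card_perm, Fintype.card_fin, nsmul_eq_mul]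
        rw [← mul_assoc, mul_inv_cancel₀ hk, one_mul]
end

section
/- Every permutation-invariant multilinear polynomial map f: (ℝ^F)^k → ℝ^d can be written as a contraction f(x_1,...,x_k) = T ×_1 [x_1;1] ×_2 ⋯ ×_k [x_k;1] for some tensor T ∈ ℝ^{(F+1)×⋯×(F+1)×d} that is partially symmetric with respect to its first k modes. -/
set_option maxHeartbeats 1000000


/-- Every permutation-invariant multilinear polynomial map is a contraction of
a tensor that is partially symmetric w.r.t. its first k modes with the inputs
in homogeneous coordinates. -/
theorem stmt7 (F k d : ℕ)
    (τ : Fin d → (Fin k → Fin F) → (Fin k → Bool) → ℝ)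
    (f : (Fin k → Fin F → ℝ) → Fin d → ℝ)
    (hf : ∀ (x : Fin k → Fin F → ℝ) (i : Fin d),
      f x i = ∑ j : Fin k → Fin F, ∑ ε : Fin k → Bool,
        τ i j ε * ∏ ℓ, (if ε ℓ then x ℓ (j ℓ) else 1))
    (hinv : ∀ (φ : Equiv.Perm (Fin k)) (x : Fin k → Fin F → ℝ),
      f (fun ℓ => x (φ ℓ)) = f x) :
    ∃ T : (Fin k → Fin (F + 1)) → Fin d → ℝ,
      (∀ (φ : Equiv.Perm (Fin k)) (j : Fin k → Fin (F + 1)) (i : Fin d),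
        T (fun ℓ => j (φ ℓ)) i = T j i) ∧
      ∀ (x : Fin k → Fin F → ℝ) (i : Fin d),
        f x i = ∑ j : Fin k → Fin (F + 1), T j i * ∏ ℓ, (Fin.snoc (x ℓ) 1 : Fin (F + 1) → ℝ) (j ℓ) := by
  classical
  -- embed (j, ε) pairs into homogeneous indices
  set e : ((Fin k → Fin F) × (Fin k → Bool)) → (Fin k → Fin (F + 1)) :=
    fun p ℓ => if p.2 ℓ then (p.1 ℓ).castSucc else Fin.last F with he
  set T' : (Fin k → Fin (F + 1)) → Fin d → ℝ :=
    fun j' i => ∑ p : (Fin k → Fin F) × (Fin k → Bool),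
      if j' = e p then τ i p.1 p.2 else 0 with hT'
  have key : ∀ (x : Fin k → Fin F → ℝ) (i : Fin d),
      (∑ j' : Fin k → Fin (F + 1),
        T' j' i * ∏ ℓ, (Fin.snoc (x ℓ) 1 : Fin (F + 1) → ℝ) (j' ℓ)) = f x i := by
    intro x i
    rw [hf]
    rw [show (∑ j : Fin k → Fin F, ∑ ε : Fin k → Bool,
        τ i j ε * ∏ ℓ, (if ε ℓ then x ℓ (j ℓ) else 1))
      = ∑ p : (Fin k → Fin F) × (Fin k → Bool),
        τ i p.1 p.2 * ∏ ℓ, (if p.2 ℓ then x ℓ (p.1 ℓ) else 1) from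
      (Fintype.sum_prod_type
        (f := fun p : (Fin k → Fin F) × (Fin k → Bool) =>
          τ i p.1 p.2 * ∏ ℓ, (if p.2 ℓ then x ℓ (p.1 ℓ) else 1))).symm]
    simp only [hT', Finset.sum_mul, ite_mul, zero_mul]
    rw [Finset.sum_comm]
    refine Finset.sum_congr rfl fun p _ => ?_
    rw [Finset.sum_ite_eq' Finset.univ (e p)
      (fun j' => τ i p.1 p.2 * ∏ ℓ, (Fin.snoc (x ℓ) 1 : Fin (F + 1) → ℝ) (j' ℓ))]
    simp only [Finset.mem_univ, if_true]
    congr 1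
    refine Finset.prod_congr rfl fun ℓ _ => ?_
    by_cases h : p.2 ℓ <;> simp [he, h]
  refine ⟨fun j i => ((k.factorial : ℝ))⁻¹ *
      ∑ φ : Equiv.Perm (Fin k), T' (fun ℓ => j (φ ℓ)) i, ?_, ?_⟩
  · intro ψ j i
    have hs : (∑ φ : Equiv.Perm (Fin k), T' (fun ℓ => j (ψ (φ ℓ))) i)
        = ∑ φ : Equiv.Perm (Fin k), T' (fun ℓ => j (φ ℓ)) i :=
      Fintype.sum_bijective (fun φ => ψ * φ) (Group.mulLeft_bijective ψ)
        _ _ fun φ => rfl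
    dsimp only
    rw [hs]
  · intro x i
    have hswap : (∑ j : Fin k → Fin (F + 1),
        (((k.factorial : ℝ))⁻¹ * ∑ φ : Equiv.Perm (Fin k), T' (fun ℓ => j (φ ℓ)) i) *
          ∏ ℓ, (Fin.snoc (x ℓ) 1 : Fin (F + 1) → ℝ) (j ℓ))
        = ((k.factorial : ℝ))⁻¹ * ∑ φ : Equiv.Perm (Fin k),
            ∑ j : Fin k → Fin (F + 1), T' (fun ℓ => j (φ ℓ)) i *
              ∏ ℓ, (Fin.snoc (x ℓ) 1 : Fin (F + 1) → ℝ) (j ℓ) := by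
      rw [Finset.sum_congr rfl fun j _ => by
        rw [mul_assoc, Finset.sum_mul, Finset.mul_sum]]
      rw [Finset.sum_comm, Finset.mul_sum]
      exact Finset.sum_congr rfl fun φ _ => (Finset.mul_sum _ _ _).symm
    have hinner : ∀ φ : Equiv.Perm (Fin k),
        (∑ j : Fin k → Fin (F + 1), T' (fun ℓ => j (φ ℓ)) i *
          ∏ ℓ, (Fin.snoc (x ℓ) 1 : Fin (F + 1) → ℝ) (j ℓ)) = f x i := by
      intro φ
      have hb : Function.Bijective (fun (j : Fin k → Fin (F + 1)) ℓ => j (φ ℓ)) := by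
        constructor
        · intro a b h
          funext ℓ
          have := congrFun h (φ.symm ℓ)
          simpa using this
        · intro b
          exact ⟨fun ℓ => b (φ.symm ℓ), by funext ℓ; simp⟩
      have := Fintype.sum_bijective (fun (j : Fin k → Fin (F + 1)) ℓ => j (φ ℓ)) hb
        (fun j => T' (fun ℓ => j (φ ℓ)) i *
          ∏ ℓ, (Fin.snoc (x ℓ) 1 : Fin (F + 1) → ℝ) (j ℓ))
        (fun j => T' j i *
          ∏ ℓ, (Fin.snoc (x (φ ℓ)) 1 : Fin (F + 1) → ℝ) (j ℓ))
        (fun j => by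
          dsimp only
          congr 1
          exact (Equiv.prod_comp φ
            (fun m => (Fin.snoc (x m) 1 : Fin (F + 1) → ℝ) (j m))).symm)
      rw [this, key (fun ℓ => x (φ ℓ)) i, hinv φ x]
    rw [hswap]
    rw [Finset.sum_congr rfl fun φ _ => hinner φ]
    rw [Finset.sum_const, Finset.card_univ, Fintype.card_perm, Fintype.card_fin, nsmul_eq_mul,
      ← mul_assoc, inv_mul_cancel₀ (by positivity : (k.factorial : ℝ) ≠ 0), one_mul]
end

section
/- The mean aggregation function f(x_1,...,x_k) = (1/k) Σ_{i=1}^k x_i on (ℝ^F)^k, for k ≥ 1, can be computed exactly by a CP layer of rank F·k with identity activations: there exist W ∈ ℝ^{(F+1)×Fk} and M ∈ ℝ^{F×Fk} such that M((Wᵀ[x_1;1]) ⊙ ⋯ ⊙ (Wᵀ[x_k;1])) = (1/k) Σ_{i=1}^k x_i for all inputs. -/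
open Finset Nat

private lemma iter_fwdDiff_zero (n : ℕ) :
    (fwdDiff (1:ℝ))^[n] (fun _ => (0:ℝ)) = fun _ => (0:ℝ) := by
  induction n with
  | zero => rfl
  | succ n ih =>
    rw [Function.iterate_succ_apply]
    have : fwdDiff (1:ℝ) (fun _ => (0:ℝ)) = fun _ => (0:ℝ) := by
      funext t; simp [fwdDiff]
    rw [this, ih]

private lemma iter_fwdDiff_pow (n : ℕ) : ∀ p : ℕ, p ≤ n → ∀ s : ℝ,
    (fwdDiff (1:ℝ))^[n] (fun t => (t + s)^p) = fun _ => (if p = n then (n ! : ℝ) else 0) := by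
  induction n with
  | zero =>
    intro p hp s
    interval_cases p
    simp [Nat.factorial]
  | succ n ih =>
    intro p hp s
    rcases Nat.eq_zero_or_pos p with hp0 | hp0
    · subst hp0
      rw [Function.iterate_succ_apply]
      have : fwdDiff (1:ℝ) (fun t => (t + s)^0) = fun _ => (0:ℝ) := by
        funext t; simp [fwdDiff]
      rw [this, iter_fwdDiff_zero]
      funext t
      simp [Nat.succ_ne_zero]
    · rw [Function.iterate_succ_apply]
      have h1 : fwdDiff (1:ℝ) (fun t => (t + s)^p)
          = ∑ m ∈ range p, ((p.choose m : ℝ) • fun t : ℝ => (t + s)^m) := by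
        funext t
        simp only [fwdDiff, Finset.sum_apply, Pi.smul_apply, smul_eq_mul]
        have ht : t + 1 + s = (t + s) + 1 := by ring
        rw [ht, add_pow]
        rw [Finset.sum_range_succ]
        simp [mul_comm]
      rw [h1, fwdDiff_iter_finset_sum]
      funext t
      rw [Finset.sum_apply]
      have h2 : ∀ m ∈ range p, ((fwdDiff (1:ℝ))^[n] ((p.choose m : ℝ) • fun t : ℝ => (t + s)^m)) t
          = (p.choose m : ℝ) * (if m = n then (n ! : ℝ) else 0) := by
        intro m hm
        rw [fwdDiff_iter_const_smul, ih m (by have := mem_range.mp hm; omega) s]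
        simp
      rw [Finset.sum_congr rfl h2]
      simp only [mul_ite, mul_zero]
      rw [Finset.sum_ite_eq' (range p) n (fun m => (p.choose m : ℝ) * (n ! : ℝ))]
      by_cases hpn : p = n + 1
      · subst hpn
        simp [Nat.choose_succ_self_right, Nat.factorial_succ]
      · have h3 : n ∉ range p := by
          rw [mem_range]; omega
        simp [h3, hpn]
private lemma moment (n p : ℕ) (hp : p ≤ n) (s : ℝ) :
    ∑ j ∈ range (n+1), ((-1:ℝ)^(n-j) * (n.choose j)) * ((j:ℝ) + s)^p
      = if p = n then (n ! : ℝ) else 0 := by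
  have h := fwdDiff_iter_eq_sum_shift (h := (1:ℝ)) (fun t : ℝ => (t + s)^p) n 0
  rw [iter_fwdDiff_pow n p hp s] at h
  simp only at h
  refine Eq.trans ?_ h.symm
  apply Finset.sum_congr rfl
  intro j hj
  rw [zsmul_eq_mul]
  push_cast
  ring
private lemma core (k : ℕ) (hk : 1 ≤ k) : ∃ c : Fin k → ℝ, ∀ x : Fin k → ℝ,
    ∑ j : Fin k, ((-1:ℝ)^(k-1-(j:ℕ)) * ((k-1).choose j)) * (∏ ℓ, (x ℓ + c j))
      = ((k-1)! : ℝ) * ∑ ℓ, x ℓ := by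
  set n := k - 1 with hn
  have hkn : n + 1 = k := by omega
  set β : ℝ := ∑ j ∈ range (n+1), ((-1:ℝ)^(n-j) * (n.choose j)) * (j:ℝ)^(n+1) with hβ
  set s : ℝ := -β / ((n+1) * n !) with hs
  have hfac : ((n ! : ℝ)) ≠ 0 := by
    exact_mod_cast Nat.factorial_ne_zero n
  -- top moment vanishes
  have htop : ∑ j ∈ range (n+1), ((-1:ℝ)^(n-j) * (n.choose j)) * ((j:ℝ) + s)^(n+1) = 0 := by
    have expand : ∀ j ∈ range (n+1),
        ((-1:ℝ)^(n-j) * (n.choose j)) * ((j:ℝ) + s)^(n+1)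
          = ∑ t ∈ range (n+2), ((-1:ℝ)^(n-j) * (n.choose j)) * ((j:ℝ)^t * s^(n+1-t) * ((n+1).choose t)) := by
      intro j hj
      rw [add_pow, Finset.mul_sum]
    rw [Finset.sum_congr rfl expand, Finset.sum_comm]
    have inner : ∀ t ∈ range (n+2),
        ∑ j ∈ range (n+1), ((-1:ℝ)^(n-j) * (n.choose j)) * ((j:ℝ)^t * s^(n+1-t) * ((n+1).choose t))
          = (∑ j ∈ range (n+1), ((-1:ℝ)^(n-j) * (n.choose j)) * ((j:ℝ) + 0)^t)
              * (s^(n+1-t) * ((n+1).choose t)) := by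
      intro t ht
      rw [Finset.sum_mul]
      exact Finset.sum_congr rfl fun j hj => by rw [add_zero]; ring
    rw [Finset.sum_congr rfl inner, Finset.sum_range_succ]
    have hlast : (∑ j ∈ range (n+1), ((-1:ℝ)^(n-j) * (n.choose j)) * ((j:ℝ) + 0)^(n+1))
        * (s^(n+1-(n+1)) * ((n+1).choose (n+1))) = β := by
      simp [hβ]
    rw [hlast]
    have hrest : ∀ t ∈ range (n+1),
        (∑ j ∈ range (n+1), ((-1:ℝ)^(n-j) * (n.choose j)) * ((j:ℝ) + 0)^t)
          * (s^(n+1-t) * ((n+1).choose t))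
          = if t = n then (n ! : ℝ) * (s * (n+1)) else 0 := by
      intro t ht
      have ht' : t ≤ n := by have := mem_range.mp ht; omega
      rw [moment n t ht' 0]
      by_cases htn : t = n
      · subst htn
        simp [Nat.choose_succ_self_right]
      · simp [htn]
    rw [Finset.sum_congr rfl hrest, Finset.sum_ite_eq' (range (n+1)) n
      (fun _ => (n ! : ℝ) * (s * (n+1)))]
    simp only [mem_range, lt_add_iff_pos_right, zero_lt_one, if_true]
    rw [hs]
    field_simp
    ring
  -- combined moment statement
  have momC : ∀ p ≤ n + 1,
      ∑ j ∈ range (n+1), ((-1:ℝ)^(n-j) * (n.choose j)) * ((j:ℝ) + s)^p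
        = if p = n then (n ! : ℝ) else 0 := by
    intro p hp
    rcases Nat.lt_or_ge p (n+1) with h | h
    · exact moment n p (by omega) s
    · have hp1 : p = n + 1 := by omega
      subst hp1
      rw [htop]
      simp
  -- conclude
  refine ⟨fun j => ((j:ℕ) : ℝ) + s, fun x => ?_⟩
  have hsum1 : ∑ j : Fin k, ((-1:ℝ)^(k-1-(j:ℕ)) * ((k-1).choose (j:ℕ))) * (∏ ℓ, (x ℓ + (((j:ℕ):ℝ) + s)))
      = ∑ j ∈ range k, ((-1:ℝ)^(k-1-j) * ((k-1).choose j)) * (∏ ℓ, (x ℓ + ((j:ℝ) + s))) :=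
    Fin.sum_univ_eq_sum_range
      (fun j => ((-1:ℝ)^(k-1-j) * ((k-1).choose j)) * (∏ ℓ, (x ℓ + ((j:ℝ) + s)))) k
  rw [hsum1]
  have hprod : ∀ j : ℕ, (∏ ℓ, (x ℓ + ((j:ℝ) + s)))
      = ∑ t ∈ (univ : Finset (Fin k)).powerset, (∏ ℓ ∈ t, x ℓ) * ((j:ℝ) + s)^(k - t.card) := by
    intro j
    rw [Finset.prod_add]
    refine Finset.sum_congr rfl fun t ht => ?_
    rw [Finset.prod_const]
    congr 1
    rw [Finset.card_sdiff_of_subset (mem_powerset.mp ht), Finset.card_univ, Fintype.card_fin]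
  have hswap : ∑ j ∈ range k, ((-1:ℝ)^(k-1-j) * ((k-1).choose j)) * (∏ ℓ, (x ℓ + ((j:ℝ) + s)))
      = ∑ t ∈ (univ : Finset (Fin k)).powerset, (∏ ℓ ∈ t, x ℓ) *
          (∑ j ∈ range k, ((-1:ℝ)^(k-1-j) * ((k-1).choose j)) * ((j:ℝ) + s)^(k - t.card)) := by
    have : ∀ j ∈ range k, ((-1:ℝ)^(k-1-j) * ((k-1).choose j)) * (∏ ℓ, (x ℓ + ((j:ℝ) + s)))
        = ∑ t ∈ (univ : Finset (Fin k)).powerset,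
            (∏ ℓ ∈ t, x ℓ) * (((-1:ℝ)^(k-1-j) * ((k-1).choose j)) * ((j:ℝ) + s)^(k - t.card)) := by
      intro j hj
      rw [hprod j, Finset.mul_sum]
      exact Finset.sum_congr rfl fun t ht => by ring
    rw [Finset.sum_congr rfl this, Finset.sum_comm]
    exact Finset.sum_congr rfl fun t ht => by rw [Finset.mul_sum]
  rw [hswap]
  have hval : ∀ t ∈ (univ : Finset (Fin k)).powerset,
      (∏ ℓ ∈ t, x ℓ) * (∑ j ∈ range k, ((-1:ℝ)^(k-1-j) * ((k-1).choose j)) * ((j:ℝ) + s)^(k - t.card))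
        = if t.card = 1 then (∏ ℓ ∈ t, x ℓ) * (n ! : ℝ) else 0 := by
    intro t ht
    have hcard : t.card ≤ k := by
      have := Finset.card_le_card (mem_powerset.mp ht)
      simpa [Finset.card_univ] using this
    have hm : ∑ j ∈ range k, ((-1:ℝ)^(k-1-j) * ((k-1).choose j)) * ((j:ℝ) + s)^(k - t.card)
        = if k - t.card = n then (n ! : ℝ) else 0 := by
      have := momC (k - t.card) (by omega)
      rw [hkn] at this
      exact this
    rw [hm]
    by_cases h1 : t.card = 1
    · have h2 : k - t.card = n := by omega
      simp [h1, h2, hn]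
    · have h2 : ¬(k - t.card = n) := by omega
      simp [h1, h2]
  rw [Finset.sum_congr rfl hval, ← Finset.sum_filter, ← Finset.powersetCard_eq_filter,
    Finset.powersetCard_one, Finset.sum_map]
  simp only [Function.Embedding.coeFn_mk, Finset.prod_singleton]
  rw [← Finset.sum_mul]
  have : (k-1)! = n ! := rfl
  rw [this]
  ring

/-- The mean aggregation over k ≥ 1 vectors in ℝ^F can be computed exactly by
a CP layer of rank F·k with identity activations. -/
theorem stmt11 (F k : ℕ) (hk : 1 ≤ k) :
    ∃ (W : Matrix (Fin (F + 1)) (Fin (F * k)) ℝ)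
      (M : Matrix (Fin F) (Fin (F * k)) ℝ),
      ∀ (x : Fin k → Fin F → ℝ) (i : Fin F),
        (∑ r, M i r * ∏ ℓ, ∑ p, W p r * (Fin.snoc (x ℓ) 1 : Fin (F + 1) → ℝ) p)
          = (1 / (k : ℝ)) * ∑ ℓ, x ℓ i := by
  obtain ⟨c, hc⟩ := core k hk
  set e : Fin F × Fin k ≃ Fin (F * k) := finProdFinEquiv with he
  set wgt : Fin k → ℝ := fun j => (-1:ℝ)^(k-1-(j:ℕ)) * ((k-1).choose (j:ℕ)) with hwgt
  refine ⟨fun p r => Fin.lastCases (c (e.symm r).2)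
      (fun q => if q = (e.symm r).1 then (1:ℝ) else 0) p,
    fun i r => if (e.symm r).1 = i then wgt (e.symm r).2 / (((k-1)! : ℝ) * k) else 0,
    fun x i => ?_⟩
  have hinner : ∀ (r : Fin (F * k)) (ℓ : Fin k),
      (∑ p, (Fin.lastCases (c (e.symm r).2)
          (fun q => if q = (e.symm r).1 then (1:ℝ) else 0) p)
          * (Fin.snoc (x ℓ) 1 : Fin (F + 1) → ℝ) p)
        = x ℓ (e.symm r).1 + c (e.symm r).2 := by
    intro r ℓ
    rw [Fin.sum_univ_castSucc]
    simp only [Fin.lastCases_castSucc, Fin.lastCases_last, Fin.snoc_castSucc, Fin.snoc_last,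
      mul_one, ite_mul, one_mul, zero_mul]
    rw [Finset.sum_ite_eq' univ (e.symm r).1 (fun q => x ℓ q)]
    simp [add_comm]
  have step1 : (∑ r, (if (e.symm r).1 = i then wgt (e.symm r).2 / (((k-1)! : ℝ) * k) else 0)
        * ∏ ℓ, ∑ p, (Fin.lastCases (c (e.symm r).2)
          (fun q => if q = (e.symm r).1 then (1:ℝ) else 0) p)
          * (Fin.snoc (x ℓ) 1 : Fin (F + 1) → ℝ) p)
      = ∑ z : Fin F × Fin k, (if z.1 = i then wgt z.2 / (((k-1)! : ℝ) * k) else 0)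
          * ∏ ℓ, (x ℓ z.1 + c z.2) := by
    rw [← Equiv.sum_comp e]
    refine Finset.sum_congr rfl fun z _ => ?_
    rw [Equiv.symm_apply_apply]
    congr 1
    exact Finset.prod_congr rfl fun ℓ _ => by
      have h := hinner (e z) ℓ
      rwa [Equiv.symm_apply_apply] at h
  rw [step1, Fintype.sum_prod_type]
  have step2 : ∀ i' : Fin F,
      (∑ j : Fin k, (if i' = i then wgt j / (((k-1)! : ℝ) * k) else 0) * ∏ ℓ, (x ℓ i' + c j))
        = if i' = i then ∑ j : Fin k, (wgt j / (((k-1)! : ℝ) * k)) * ∏ ℓ, (x ℓ i' + c j) else 0 := by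
    intro i'
    split <;> simp
  rw [Finset.sum_congr rfl fun i' _ => step2 i',
    Finset.sum_ite_eq' univ i (fun i' => ∑ j : Fin k, (wgt j / (((k-1)! : ℝ) * k)) * ∏ ℓ, (x ℓ i' + c j))]
  simp only [mem_univ, if_true]
  have hfin : ∑ j : Fin k, (wgt j / (((k-1)! : ℝ) * k)) * ∏ ℓ, (x ℓ i + c j)
      = (1 / (((k-1)! : ℝ) * k)) * ∑ j : Fin k, wgt j * ∏ ℓ, (x ℓ i + c j) := by
    rw [Finset.mul_sum]
    exact Finset.sum_congr rfl fun j _ => by ring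
  rw [hfin, hc (fun ℓ => x ℓ i)]
  have hfac : (((k-1)! : ℝ)) ≠ 0 := by exact_mod_cast Nat.factorial_ne_zero (k-1)
  have hk0 : (k : ℝ) ≠ 0 := by positivity
  field_simp
end
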